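/- arXiv:2312.07119 — 2 statements merged into one kernel-verified Lean document; each statement's English description precedes it below -/
import Mathlib

section
/- Let λ ∈ C be nonzero and not a root of unity, and let F ∈ O_2 be a formal power series. Then there exists a unique formal power series h = I + H with H ∈ O_2 such that (λI + F)∘h = h∘(λI), i.e. h formally conjugates λI + F to its linear part. -/
open scoped ENNReal

noncomputable def pcoeff (f : PowerSeries ℂ) (k : ℕ) : ℂ := PowerSeries.coeff k f

/-- Composition of formal power series: (f∘g)_m = Σ_{k=0}^m f_k (g^k)_m. -/
noncomputable def pcomp (f g : PowerSeries ℂ) : PowerSeries ℂ :=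
  PowerSeries.mk fun m => ∑ k ∈ Finset.range (m + 1), pcoeff f k * pcoeff (g ^ k) m

/-- f ∈ O_m : the first m coefficients vanish. -/
def inO (m : ℕ) (f : PowerSeries ℂ) : Prop := ∀ i < m, pcoeff f i = 0

/-- Truncation [f]_d = f_0 + f_1 z + ... + f_d z^d, as a power series. -/
noncomputable def ptrunc (d : ℕ) (f : PowerSeries ℂ) : PowerSeries ℂ :=
  PowerSeries.mk fun k => if k ≤ d then pcoeff f k else 0

/-- Majorant evaluation f^(r) = Σ |f_k| r^k ∈ [0,∞]. -/
noncomputable def maj (f : PowerSeries ℂ) (r : ℝ≥0∞) : ℝ≥0∞ :=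
  ∑' k, (‖pcoeff f k‖₊ : ℝ≥0∞) * r ^ k

/-- Evaluation of a power series at a point. -/
noncomputable def peval (f : PowerSeries ℂ) (z : ℂ) : ℂ := ∑' k, pcoeff f k * z ^ k

/-- f has positive radius of convergence. -/
def posRadius (f : PowerSeries ℂ) : Prop :=
  ∃ r : ℝ, 0 < r ∧ Summable fun k => ‖pcoeff f k‖ * r ^ k

/-- The operator L_λ(H) = H∘(λI) − λH. -/
noncomputable def Lop (l : ℂ) (H : PowerSeries ℂ) : PowerSeries ℂ :=
  pcomp H (l • PowerSeries.X) - l • H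


/-!
Writing `h = I + H`, the conjugacy equation says `L_λ(H) = F ∘ (I + H)`, and `L_λ` acts on `z^m` by
the factor `λ^m - λ`, which is nonzero for `m ≥ 2` because `λ` is not a root of unity. So on `O_2`
the equation is the fixed-point problem `H = L_λ⁻¹(F ∘ (I + H))`. Since `F ∈ O_2`, the `m`-th
coefficient of `F ∘ (I + H)` only involves coefficients of `H` of degree `< m`, so the fixed point
exists and is unique, its coefficients being determined recursively.
-/

open PowerSeries Finset

section FixedPoint

variable {R : Type*} [Semiring R]

noncomputable def causalFixCoeff (Φ : R⟦X⟧ → R⟦X⟧) (m : ℕ) : R :=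
  coeff m (Φ (mk fun i => if i < m then causalFixCoeff Φ i else 0))
termination_by m
decreasing_by assumption

theorem existsUnique_fixedPoint_of_causal (Φ : R⟦X⟧ → R⟦X⟧)
    (hΦ : ∀ f g m, (∀ i < m, coeff i f = coeff i g) → coeff m (Φ f) = coeff m (Φ g)) :
    ∃! f, Φ f = f := by
  refine ⟨mk (causalFixCoeff Φ), ?_, fun g hg => ?_⟩
  · ext m
    rw [coeff_mk, causalFixCoeff]
    exact hΦ _ _ m fun i hi => by simp [hi]
  · ext m
    induction m using Nat.strong_induction_on with
    | _ m ih =>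
      rw [← hg, coeff_mk, causalFixCoeff]
      exact hΦ _ _ m fun i hi => by simp [hi, ih i hi]

end FixedPoint

theorem pow_add_pred_dvd_pow_sub_pow {A : Type*} [CommRing A] {p a b : A} {m : ℕ}
    (ha : p ∣ a) (hb : p ∣ b) (hab : p ^ m ∣ a - b) (k : ℕ) :
    p ^ (m + (k - 1)) ∣ a ^ k - b ^ k := by
  rw [← geom_sum₂_mul, pow_add, mul_comm (p ^ m)]
  refine mul_dvd_mul (dvd_sum fun i hi => ?_) hab
  have hsplit : p ^ (k - 1) = p ^ i * p ^ (k - 1 - i) := by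
    rw [← pow_add]; congr 1; have := mem_range.mp hi; omega
  rw [hsplit]
  exact mul_dvd_mul (pow_dvd_pow_of_dvd ha i) (pow_dvd_pow_of_dvd hb _)

theorem pcomp_add_left (f f' g : PowerSeries ℂ) :
    pcomp (f + f') g = pcomp f g + pcomp f' g := by
  ext m
  simp [pcomp, pcoeff, add_mul, sum_add_distrib]

theorem pcomp_smul_left (c : ℂ) (f g : PowerSeries ℂ) :
    pcomp (c • f) g = c • pcomp f g := by
  ext m
  simp [pcomp, pcoeff, mul_sum, mul_assoc]

theorem pcomp_X {g : PowerSeries ℂ} (hg : X ∣ g) : pcomp X g = g := by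
  ext m
  rcases Nat.eq_zero_or_pos m with rfl | hm
  · simpa [pcomp, pcoeff] using (X_dvd_iff.mp hg).symm
  · rw [pcomp, coeff_mk, sum_eq_single 1]
    · simp [pcoeff]
    · intro k _ hk; simp [pcoeff, coeff_X, hk]
    · intro h; exact absurd (mem_range.mpr (by omega)) h

theorem pcomp_smul_X (f : PowerSeries ℂ) (c : ℂ) : pcomp f (c • X) = rescale c f := by
  ext m
  rw [pcomp, coeff_mk, coeff_rescale, sum_eq_single_of_mem m (self_mem_range_succ m)]
  · simp [pcoeff, smul_pow, coeff_X_pow, mul_comm]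
  · intro k _ hk
    simp [pcoeff, smul_pow, coeff_X_pow, Ne.symm hk]

theorem inO_pcomp {n : ℕ} {f : PowerSeries ℂ} (hf : inO n f) (g : PowerSeries ℂ) :
    inO n (pcomp f g) := by
  intro m hm
  simp only [pcoeff, pcomp, coeff_mk]
  exact sum_eq_zero fun k hk => by
    rw [show coeff k f = 0 from hf k (by have := mem_range.mp hk; omega), zero_mul]

theorem coeff_pcomp_eq_of_X_pow_dvd_sub {F g g' : PowerSeries ℂ} (hF : inO 2 F)
    (hg : X ∣ g) (hg' : X ∣ g') {m : ℕ} (hgg' : X ^ m ∣ g - g') :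
    coeff m (pcomp F g) = coeff m (pcomp F g') := by
  simp only [pcomp, coeff_mk]
  refine sum_congr rfl fun k _ => ?_
  match k with
  | 0 => rfl
  | 1 => rw [hF 1 (by omega), zero_mul, zero_mul]
  | k + 2 =>
    have hdvd : X ^ (m + 1) ∣ g ^ (k + 2) - g' ^ (k + 2) :=
      (pow_dvd_pow X (by omega)).trans (pow_add_pred_dvd_pow_sub_pow hg hg' hgg' (k + 2))
    have hcoeff := X_pow_dvd_iff.mp hdvd m (by omega)
    rw [map_sub, sub_eq_zero] at hcoeff
    simp only [pcoeff, hcoeff]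

theorem coeff_Lop (l : ℂ) (H : PowerSeries ℂ) (m : ℕ) :
    coeff m (Lop l H) = (l ^ m - l) * coeff m H := by
  simp [Lop, pcomp_smul_X, coeff_rescale, sub_mul]

theorem conjugacy_iff_Lop_eq {l : ℂ} {F H : PowerSeries ℂ} (hH : X ∣ H) :
    pcomp (l • X + F) (X + H) = pcomp (X + H) (l • X) ↔ Lop l H = pcomp F (X + H) := by
  rw [pcomp_add_left, pcomp_smul_left, pcomp_X (dvd_add dvd_rfl hH), pcomp_smul_X, Lop,
    pcomp_smul_X, map_add, rescale_X]
  simp only [smul_eq_C_mul]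
  constructor <;> intro h <;> linear_combination -h

theorem pow_sub_self_ne_zero {K : Type*} [Field K] {l : K} (hl : l ≠ 0)
    (hroot : ∀ n : ℕ, 1 ≤ n → l ^ n ≠ 1) {m : ℕ} (hm : 2 ≤ m) : l ^ m - l ≠ 0 := by
  obtain ⟨n, rfl⟩ : ∃ n, m = n + 1 := ⟨m - 1, by omega⟩
  rw [pow_succ, ← sub_one_mul, mul_ne_zero_iff, sub_ne_zero]
  exact ⟨hroot n (by omega), hl⟩

theorem X_dvd_of_inO {n : ℕ} {f : PowerSeries ℂ} (hn : 1 ≤ n) (hf : inO n f) : X ∣ f := by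
  rw [X_dvd_iff, ← coeff_zero_eq_constantCoeff_apply]
  exact hf 0 hn

noncomputable def projO (n : ℕ) (f : PowerSeries ℂ) : PowerSeries ℂ :=
  mk fun i => if i < n then 0 else coeff i f

theorem inO_projO (n : ℕ) (f : PowerSeries ℂ) : inO n (projO n f) := fun i hi => by
  simp [pcoeff, projO, hi]

theorem projO_eq_self {n : ℕ} {f : PowerSeries ℂ} (hf : inO n f) : projO n f = f := by
  ext i
  by_cases hi : i < n
  · simp [projO, hi, show coeff i f = 0 from hf i hi]
  · simp [projO, hi]

noncomputable def LopInv (l : ℂ) (G : PowerSeries ℂ) : PowerSeries ℂ :=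
  mk fun m => if m < 2 then 0 else coeff m G / (l ^ m - l)

theorem inO_LopInv (l : ℂ) (G : PowerSeries ℂ) : inO 2 (LopInv l G) := fun i hi => by
  rw [pcoeff, LopInv, coeff_mk, if_pos hi]

theorem inO_two_and_Lop_eq_iff {l : ℂ} (hres : ∀ m, 2 ≤ m → l ^ m - l ≠ 0)
    {G H : PowerSeries ℂ} (hG : inO 2 G) :
    inO 2 H ∧ Lop l H = G ↔ LopInv l G = H := by
  constructor
  · rintro ⟨hH, hL⟩
    ext m
    rw [LopInv, coeff_mk]
    split_ifs with hm
    · exact (hH m hm).symm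
    · rw [div_eq_iff (hres m (by omega)), mul_comm, ← coeff_Lop, hL]
  · rintro rfl
    refine ⟨inO_LopInv l G, ?_⟩
    ext m
    rw [coeff_Lop, LopInv, coeff_mk]
    split_ifs with hm
    · rw [mul_zero]; exact (hG m hm).symm
    · exact mul_div_cancel₀ _ (hres m (by omega))

/-- `H ↦ L_λ⁻¹(F ∘ (I + H))`, precomposed with the projection onto `O_2`: without it the `m`-th
coefficient of `F ∘ (I + H)` would also depend on the constant term of `H`. -/
noncomputable def linearizationMap (l : ℂ) (F H : PowerSeries ℂ) : PowerSeries ℂ :=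
  LopInv l (pcomp F (X + projO 2 H))

theorem inO_two_and_conjugacy_iff {l : ℂ} (hres : ∀ m, 2 ≤ m → l ^ m - l ≠ 0)
    {F : PowerSeries ℂ} (hF : inO 2 F) (H : PowerSeries ℂ) :
    (inO 2 H ∧ pcomp (l • X + F) (X + H) = pcomp (X + H) (l • X)) ↔
      linearizationMap l F H = H := by
  refine ⟨fun ⟨hH, hconj⟩ => ?_, fun hfix => ?_⟩
  · rw [conjugacy_iff_Lop_eq (X_dvd_of_inO one_le_two hH)] at hconj
    rw [linearizationMap, projO_eq_self hH]
    exact (inO_two_and_Lop_eq_iff hres (inO_pcomp hF _)).mp ⟨hH, hconj⟩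
  · have hH : inO 2 H := hfix ▸ inO_LopInv l _
    rw [linearizationMap, projO_eq_self hH] at hfix
    rw [conjugacy_iff_Lop_eq (X_dvd_of_inO one_le_two hH)]
    exact (inO_two_and_Lop_eq_iff hres (inO_pcomp hF _)).mpr hfix

theorem coeff_linearizationMap_congr (l : ℂ) {F : PowerSeries ℂ} (hF : inO 2 F)
    (f g : PowerSeries ℂ) (m : ℕ) (hfg : ∀ i < m, coeff i f = coeff i g) :
    coeff m (linearizationMap l F f) = coeff m (linearizationMap l F g) := by
  simp only [linearizationMap, LopInv, coeff_mk]
  split_ifs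
  · rfl
  have hX : ∀ f, X ∣ X + projO 2 f := fun f =>
    dvd_add dvd_rfl (X_dvd_of_inO one_le_two (inO_projO 2 f))
  refine congrArg (· / _) (coeff_pcomp_eq_of_X_pow_dvd_sub hF (hX f) (hX g) ?_)
  rw [add_sub_add_left_eq_sub, X_pow_dvd_iff]
  intro i hi
  simp [projO, hfg i hi]

theorem formal_linearization (l : ℂ) (hl : l ≠ 0)
    (hroot : ∀ n : ℕ, 1 ≤ n → l ^ n ≠ 1) (F : PowerSeries ℂ) (hF : inO 2 F) :
    ∃! H : PowerSeries ℂ, inO 2 H ∧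
      pcomp (l • PowerSeries.X + F) (PowerSeries.X + H)
        = pcomp (PowerSeries.X + H) (l • PowerSeries.X) := by
  have hres : ∀ m, 2 ≤ m → l ^ m - l ≠ 0 := fun _ => pow_sub_self_ne_zero hl hroot
  rw [existsUnique_congr (inO_two_and_conjugacy_iff hres hF)]
  exact existsUnique_fixedPoint_of_causal _ (coeff_linearizationMap_congr l hF)
end

section
/- Let λ with |λ| ∉ {0,1}, F ∈ O_2, and set ω = inf_{m≥2} |λ^m − λ|; then ω > 0. If F^(ω^2 r) ≤ αωr for some α ∈ (0, ω^2) and r > 0, then the formal linearizing series H (the unique H ∈ O_2 with H∘(λI) − λH = F∘(I+H)) satisfies H^((ω^2 − α)r) ≤ αr. -/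
open scoped ENNReal

/-! Comparing coefficients in `H ∘ (λ I) - λ H = F ∘ (I + H)` gives
`(λ ^ m - λ) H_m = (F ∘ (I + H))_m`, and since `F ∈ O_2` the right-hand side only involves the
coefficients of `H` of degree `< m`. Majorizing, the truncations `H_N` of `H` satisfy
`ω Ĥ_{N+1}(s) ≤ F̂(s + Ĥ_N(s))`, where `F̂`, `Ĥ` are the majorant series. With
`s = (ω² - α) r`, induction on `N` gives `Ĥ_N(s) ≤ α r`, because then `s + Ĥ_N(s) ≤ ω² r` and
`F̂(ω² r) ≤ α ω r`. That `ω > 0` follows from `|λ ^ m - λ| ≥ |λ| ||λ| - 1|` for `m ≥ 2`. -/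

open PowerSeries Finset

theorem abs_sub_one_le_abs_pow_sub_one {b : ℝ} (hb : 0 ≤ b) {n : ℕ} (hn : n ≠ 0) :
    |b - 1| ≤ |b ^ n - 1| := by
  have hgeom : 1 ≤ ∑ i ∈ range n, b ^ i := by
    simpa using single_le_sum (fun i _ => pow_nonneg hb i) (mem_range.2 (Nat.pos_of_ne_zero hn))
  rw [← geom_sum_mul, abs_mul, abs_of_nonneg (zero_le_one.trans hgeom)]
  exact le_mul_of_one_le_left (abs_nonneg _) hgeom

theorem norm_mul_abs_norm_sub_one_le_norm_pow_sub {𝕜 : Type*} [NormedDivisionRing 𝕜] (l : 𝕜)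
    {m : ℕ} (hm : 2 ≤ m) : ‖l‖ * |‖l‖ - 1| ≤ ‖l ^ m - l‖ := by
  have hfactor : ‖l ^ m‖ - ‖l‖ = ‖l‖ * (‖l‖ ^ (m - 1) - 1) := by
    rw [norm_pow, mul_sub, ← pow_succ', Nat.sub_add_cancel (by omega), mul_one]
  calc ‖l‖ * |‖l‖ - 1| ≤ ‖l‖ * |‖l‖ ^ (m - 1) - 1| :=
        mul_le_mul_of_nonneg_left
          (abs_sub_one_le_abs_pow_sub_one (norm_nonneg l) (by omega)) (norm_nonneg l)
    _ = |‖l ^ m‖ - ‖l‖| := by rw [hfactor, abs_mul, abs_norm]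
    _ ≤ ‖l ^ m - l‖ := abs_norm_sub_norm_le _ _

theorem sInf_norm_pow_sub_pos {𝕜 : Type*} [NormedDivisionRing 𝕜] {l : 𝕜} (hl0 : ‖l‖ ≠ 0)
    (hl1 : ‖l‖ ≠ 1) : 0 < sInf {x : ℝ | ∃ m : ℕ, 2 ≤ m ∧ x = ‖l ^ m - l‖} := by
  have hpos : 0 < ‖l‖ * |‖l‖ - 1| :=
    mul_pos ((norm_nonneg l).lt_of_ne' hl0) (abs_pos.2 (sub_ne_zero.2 hl1))
  refine hpos.trans_le (le_csInf ⟨_, 2, le_rfl, rfl⟩ ?_)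
  rintro x ⟨m, hm, rfl⟩
  exact norm_mul_abs_norm_sub_one_le_norm_pow_sub l hm

theorem pow_succ_dvd_pow_sub_pow {R : Type*} [CommRing R] {x a b : R} (ha : x ∣ a) (hb : x ∣ b)
    {m k : ℕ} (hab : x ^ m ∣ a - b) (hk : 2 ≤ k) : x ^ (m + 1) ∣ a ^ k - b ^ k := by
  rw [← geom_sum₂_mul, pow_succ']
  refine mul_dvd_mul (dvd_sum fun i _ => ?_) hab
  rcases Nat.eq_zero_or_pos i with rfl | hi
  · exact dvd_mul_of_dvd_right (dvd_pow hb (by omega)) _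
  · exact dvd_mul_of_dvd_left (dvd_pow ha hi.ne') _

theorem inO_iff_X_pow_dvd {m : ℕ} {f : PowerSeries ℂ} : inO m f ↔ X ^ m ∣ f :=
  X_pow_dvd_iff.symm

@[simp]
theorem pcoeff_ptrunc (d k : ℕ) (f : PowerSeries ℂ) :
    pcoeff (ptrunc d f) k = if k ≤ d then pcoeff f k else 0 :=
  coeff_mk _ _

theorem inO_ptrunc {m : ℕ} {f : PowerSeries ℂ} (hf : inO m f) (d : ℕ) : inO m (ptrunc d f) :=
  fun i hi => by simp [hf i hi]

theorem X_pow_succ_dvd_sub_ptrunc (d : ℕ) (f : PowerSeries ℂ) : X ^ (d + 1) ∣ f - ptrunc d f :=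
  X_pow_dvd_iff.2 fun i hi => by simp [ptrunc, pcoeff, Nat.le_of_lt_succ hi]

theorem pcoeff_pcomp_eq_of_X_pow_dvd_sub {F G G' : PowerSeries ℂ} (hF : inO 2 F) (hG : X ∣ G)
    (hG' : X ∣ G') {m : ℕ} (h : X ^ m ∣ G - G') : pcoeff (pcomp F G) m = pcoeff (pcomp F G') m := by
  simp only [pcomp, pcoeff, coeff_mk]
  refine sum_congr rfl fun k _ => ?_
  rcases lt_or_ge k 2 with hk | hk
  · simp [show coeff k F = 0 from hF k hk]
  · have hdvd := X_pow_dvd_iff.1 (pow_succ_dvd_pow_sub_pow hG hG' h hk) m m.lt_succ_self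
    rw [map_sub, sub_eq_zero] at hdvd
    rw [hdvd]

theorem pcoeff_pcomp_smul_X (f : PowerSeries ℂ) (l : ℂ) (m : ℕ) :
    pcoeff (pcomp f (l • X)) m = l ^ m * pcoeff f m := by
  simp [pcomp, pcoeff, smul_pow, coeff_X_pow, mul_comm]

theorem sub_mul_pcoeff_of_homological_eq {l : ℂ} {H G : PowerSeries ℂ}
    (heq : pcomp H (l • X) - l • H = G) (m : ℕ) : (l ^ m - l) * pcoeff H m = pcoeff G m := by
  have hcomp := pcoeff_pcomp_smul_X H l m
  simp only [pcoeff] at hcomp ⊢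
  rw [← heq, map_sub, map_smul, hcomp, smul_eq_mul, sub_mul]

theorem ENNReal.tsum_mul_tsum_eq_tsum_sum_antidiagonal (f g : ℕ → ℝ≥0∞) :
    (∑' i, f i) * ∑' j, g j = ∑' n, ∑ p ∈ antidiagonal n, f p.1 * g p.2 := by
  simp_rw [← ENNReal.tsum_mul_right, ← ENNReal.tsum_mul_left, ← ENNReal.tsum_prod]
  rw [← HasAntidiagonal.sigmaAntidiagonalEquivProd.tsum_eq, ENNReal.tsum_sigma']
  congr 1 with n
  rw [← Finset.tsum_subtype]
  rfl

theorem maj_mono (f : PowerSeries ℂ) : Monotone (maj f) := fun _ _ hrs =>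
  ENNReal.tsum_le_tsum fun _ => by gcongr

theorem maj_add_le (f g : PowerSeries ℂ) (r : ℝ≥0∞) : maj (f + g) r ≤ maj f r + maj g r := by
  rw [maj, maj, maj, ← ENNReal.tsum_add]
  refine ENNReal.tsum_le_tsum fun k => ?_
  rw [← add_mul, pcoeff, map_add]
  gcongr
  exact_mod_cast nnnorm_add_le _ _

theorem maj_X (r : ℝ≥0∞) : maj X r = r := by
  rw [maj, tsum_eq_single 1 fun k hk => by simp [pcoeff, coeff_X, hk]]
  simp [pcoeff]

theorem maj_one (r : ℝ≥0∞) : maj 1 r = 1 := by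
  rw [maj, tsum_eq_single 0 fun k hk => by simp [pcoeff, coeff_one, hk]]
  simp [pcoeff]

theorem maj_mul_le (f g : PowerSeries ℂ) (r : ℝ≥0∞) : maj (f * g) r ≤ maj f r * maj g r := by
  rw [maj, maj, maj, ENNReal.tsum_mul_tsum_eq_tsum_sum_antidiagonal]
  refine ENNReal.tsum_le_tsum fun n => ?_
  calc (‖pcoeff (f * g) n‖₊ : ℝ≥0∞) * r ^ n
      ≤ (∑ p ∈ antidiagonal n, (‖pcoeff f p.1‖₊ * ‖pcoeff g p.2‖₊ : ℝ≥0∞)) * r ^ n := by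
        gcongr
        rw [pcoeff, coeff_mul]
        exact_mod_cast (nnnorm_sum_le _ _).trans (by simp [pcoeff])
    _ = ∑ p ∈ antidiagonal n, ‖pcoeff f p.1‖₊ * r ^ p.1 * (‖pcoeff g p.2‖₊ * r ^ p.2) := by
        rw [sum_mul]
        refine sum_congr rfl fun p hp => ?_
        rw [← mem_antidiagonal.1 hp, pow_add]
        ring

theorem maj_pow_le (f : PowerSeries ℂ) (r : ℝ≥0∞) (k : ℕ) : maj (f ^ k) r ≤ maj f r ^ k := by
  induction k with
  | zero => simp [maj_one]
  | succ k ih =>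
    rw [pow_succ, pow_succ]
    exact (maj_mul_le _ _ r).trans (by gcongr)

theorem maj_pcomp_le (F G : PowerSeries ℂ) (r : ℝ≥0∞) : maj (pcomp F G) r ≤ maj F (maj G r) :=
  calc maj (pcomp F G) r
      ≤ ∑' m, ∑' k, (‖pcoeff F k‖₊ : ℝ≥0∞) * ‖pcoeff (G ^ k) m‖₊ * r ^ m := by
        refine ENNReal.tsum_le_tsum fun m => ?_
        rw [ENNReal.tsum_mul_right]
        gcongr
        refine le_trans ?_ (ENNReal.sum_le_tsum (range (m + 1)))
        rw [pcomp, pcoeff, coeff_mk]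
        exact_mod_cast (nnnorm_sum_le _ _).trans (by simp)
    _ = ∑' k, (‖pcoeff F k‖₊ : ℝ≥0∞) * maj (G ^ k) r := by
        rw [ENNReal.tsum_comm]
        simp_rw [maj, ← ENNReal.tsum_mul_left, mul_assoc]
    _ ≤ maj F (maj G r) := ENNReal.tsum_le_tsum fun k => by gcongr; exact maj_pow_le G r k

theorem maj_ptrunc (d : ℕ) (f : PowerSeries ℂ) (r : ℝ≥0∞) :
    maj (ptrunc d f) r = ∑ k ∈ range (d + 1), (‖pcoeff f k‖₊ : ℝ≥0∞) * r ^ k := by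
  rw [maj, tsum_eq_sum (s := range (d + 1)) fun k hk => by
    simp [Nat.lt_succ_iff.not.1 (mt mem_range.2 hk)]]
  exact sum_congr rfl fun k hk => by simp [Nat.lt_succ_iff.1 (mem_range.1 hk)]

theorem maj_le_of_forall_maj_ptrunc_le {f : PowerSeries ℂ} {r c : ℝ≥0∞}
    (h : ∀ d, maj (ptrunc d f) r ≤ c) : maj f r ≤ c :=
  ENNReal.tsum_le_of_sum_range_le fun d =>
    (sum_le_sum_of_subset (range_subset_range.2 d.le_succ)).trans ((maj_ptrunc d f r).symm ▸ h d)

theorem ofReal_mul_maj_le_of_norm_coeff_le {f g : PowerSeries ℂ} {c : ℝ}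
    (h : ∀ k, c * ‖pcoeff f k‖ ≤ ‖pcoeff g k‖) (r : ℝ≥0∞) :
    ENNReal.ofReal c * maj f r ≤ maj g r := by
  rw [maj, maj, ← ENNReal.tsum_mul_left]
  refine ENNReal.tsum_le_tsum fun k => ?_
  rw [← mul_assoc]
  gcongr
  rw [← enorm_eq_nnnorm, ← enorm_eq_nnnorm, ← ofReal_norm, ← ofReal_norm,
    ← ENNReal.ofReal_mul' (norm_nonneg _)]
  exact ENNReal.ofReal_le_ofReal (h k)

section Homological

variable {l : ℂ} {ω : ℝ} {F H : PowerSeries ℂ}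

theorem norm_pcoeff_ptrunc_succ_le (hωl : ∀ m, 2 ≤ m → ω ≤ ‖l ^ m - l‖) (hF : inO 2 F)
    (hH : inO 2 H) (heq : pcomp H (l • X) - l • H = pcomp F (X + H)) (N k : ℕ) :
    ω * ‖pcoeff (ptrunc (N + 1) H) k‖ ≤ ‖pcoeff (pcomp F (X + ptrunc N H)) k‖ := by
  rw [pcoeff_ptrunc]
  split_ifs with hkN
  · rcases lt_or_ge k 2 with hk | hk
    · simp [hH k hk]
    have hX_dvd : X ∣ H := (dvd_pow_self X two_ne_zero).trans (inO_iff_X_pow_dvd.1 hH)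
    have hX_dvd_trunc : X ∣ ptrunc N H :=
      (dvd_pow_self X two_ne_zero).trans (inO_iff_X_pow_dvd.1 (inO_ptrunc hH N))
    have hdiff : X ^ k ∣ (X + H) - (X + ptrunc N H) := by
      rw [add_sub_add_left_eq_sub]
      exact (pow_dvd_pow X hkN).trans (X_pow_succ_dvd_sub_ptrunc N H)
    calc ω * ‖pcoeff H k‖ ≤ ‖l ^ k - l‖ * ‖pcoeff H k‖ := by gcongr; exact hωl k hk
      _ = ‖pcoeff (pcomp F (X + H)) k‖ := by
        rw [← norm_mul, sub_mul_pcoeff_of_homological_eq heq]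
      _ = ‖pcoeff (pcomp F (X + ptrunc N H)) k‖ := by
        rw [pcoeff_pcomp_eq_of_X_pow_dvd_sub hF (dvd_add dvd_rfl hX_dvd)
          (dvd_add dvd_rfl hX_dvd_trunc) hdiff]
  · simp

theorem maj_le_of_homological_eq (hω : 0 < ω) (hωl : ∀ m, 2 ≤ m → ω ≤ ‖l ^ m - l‖)
    (hF : inO 2 F) (hH : inO 2 H) (heq : pcomp H (l • X) - l • H = pcomp F (X + H))
    {s c : ℝ≥0∞} (hFc : maj F (s + c) ≤ ENNReal.ofReal ω * c) : maj H s ≤ c := by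
  refine maj_le_of_forall_maj_ptrunc_le fun N => ?_
  induction N with
  | zero => simp [maj_ptrunc, hH 0 two_pos]
  | succ N ih =>
    refine (ENNReal.mul_le_mul_iff_right (by simpa using hω) ENNReal.ofReal_ne_top).1 ?_
    calc ENNReal.ofReal ω * maj (ptrunc (N + 1) H) s
        ≤ maj (pcomp F (X + ptrunc N H)) s :=
          ofReal_mul_maj_le_of_norm_coeff_le (norm_pcoeff_ptrunc_succ_le hωl hF hH heq N) s
      _ ≤ maj F (maj (X + ptrunc N H) s) := maj_pcomp_le _ _ _
      _ ≤ maj F (s + c) :=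
          maj_mono F ((maj_add_le _ _ _).trans (add_le_add (maj_X s).le ih))
      _ ≤ ENNReal.ofReal ω * c := hFc

end Homological

theorem hyperbolic_maj (l : ℂ) (hl0 : ‖l‖ ≠ 0) (hl1 : ‖l‖ ≠ 1)
    (F : PowerSeries ℂ) (hF : inO 2 F) (ω : ℝ)
    (hω : ω = sInf {x : ℝ | ∃ m : ℕ, 2 ≤ m ∧ x = ‖l ^ m - l‖}) :
    0 < ω ∧
    ∀ (α r : ℝ) (H : PowerSeries ℂ), 0 < r → 0 < α → α < ω ^ 2 → inO 2 H →
      pcomp H (l • PowerSeries.X) - l • H = pcomp F (PowerSeries.X + H) →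
      maj F (ENNReal.ofReal (ω ^ 2 * r)) ≤ ENNReal.ofReal (α * ω * r) →
      maj H (ENNReal.ofReal ((ω ^ 2 - α) * r)) ≤ ENNReal.ofReal (α * r) := by
  have hω_pos : 0 < ω := hω ▸ sInf_norm_pow_sub_pos hl0 hl1
  refine ⟨hω_pos, fun α r H hr hα hαω hH heq hFmaj => ?_⟩
  have hωl : ∀ m, 2 ≤ m → ω ≤ ‖l ^ m - l‖ := fun m hm =>
    hω ▸ csInf_le ⟨0, by rintro x ⟨m, -, rfl⟩; positivity⟩ ⟨m, hm, rfl⟩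
  refine maj_le_of_homological_eq hω_pos hωl hF hH heq ?_
  rw [← ENNReal.ofReal_add (mul_nonneg (sub_nonneg.2 hαω.le) hr.le) (by positivity),
    ← ENNReal.ofReal_mul hω_pos.le]
  rwa [show (ω ^ 2 - α) * r + α * r = ω ^ 2 * r by ring, show ω * (α * r) = α * ω * r by ring]
end
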